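/- Let 𝕂 be an algebraically closed field of characteristic 0, I an ideal of 𝕂[x₁,…,xₙ] such that A = 𝕂[x]/I has finite dimension r over 𝕂, and let {ξ₁,…,ξ_{r'}} ⊂ 𝕂ⁿ be the zero set of I. For each i let Dᵢ = D_{ξᵢ}(I). Then: (i) each Dᵢ is stable under all partial derivatives ∂/∂yⱼ; (ii) setting μᵢ = dim Dᵢ one has μ₁ + ⋯ + μ_{r'} = r; (iii) every linear form Λ : 𝕂[x] → 𝕂 vanishing on I can be written uniquely as Λ = Σ_{i=1}^{r'} ωᵢ·e_{ξᵢ} with ωᵢ ∈ Dᵢ, and conversely every linear form of this shape vanishes on I. -/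

import Mathlib

open MvPolynomial

namespace PolyExp

variable {K : Type*} [Field K] {n : ℕ}

/-- The iterated partial derivative operator `∂^β` on polynomials. -/
noncomputable def pderivPow (β : Fin n →₀ ℕ) :
    Module.End K (MvPolynomial (Fin n) K) :=
  (List.ofFn fun i : Fin n =>
    ((MvPolynomial.pderiv i).toLinearMap : Module.End K (MvPolynomial (Fin n) K)) ^ (β i)).prod

/-- The constant coefficient differential operator `ω(∂) = Σ_β ω_β ∂^β`. -/
noncomputable def diffOp (ω : MvPolynomial (Fin n) K) :
    Module.End K (MvPolynomial (Fin n) K) :=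
  ∑ β ∈ ω.support, ω.coeff β • pderivPow β

/-- The evaluation linear form `e_ξ : p ↦ p(ξ)`. -/
noncomputable def evalDual (ξ : Fin n → K) : Module.Dual K (MvPolynomial (Fin n) K) :=
  (MvPolynomial.aeval ξ).toLinearMap

/-- The polynomial-exponential linear form `ω·e_ξ : p ↦ (ω(∂)p)(ξ)`. -/
noncomputable def polyExpDual (ω : MvPolynomial (Fin n) K) (ξ : Fin n → K) :
    Module.Dual K (MvPolynomial (Fin n) K) :=
  evalDual ξ ∘ₗ diffOp ω

/-- The Hankel operator `H_σ : p ↦ (q ↦ σ(p·q))`. -/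
noncomputable def hankel (σ : Module.Dual K (MvPolynomial (Fin n) K)) :
    MvPolynomial (Fin n) K →ₗ[K] Module.Dual K (MvPolynomial (Fin n) K) :=
  (LinearMap.llcomp K (MvPolynomial (Fin n) K) (MvPolynomial (Fin n) K) K σ) ∘ₗ
    (LinearMap.mul K (MvPolynomial (Fin n) K))

/-- `μ(ω)`: the dimension of the span of all partial derivatives of `ω`. -/
noncomputable def mu (ω : MvPolynomial (Fin n) K) : ℕ :=
  Module.finrank K (Submodule.span K (Set.range fun β : Fin n →₀ ℕ => pderivPow β ω))

/-- The kernel `I_σ` of the Hankel operator, as an ideal. -/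
def hankelKer (σ : Module.Dual K (MvPolynomial (Fin n) K)) : Ideal (MvPolynomial (Fin n) K) where
  carrier := {p | ∀ q, σ (p * q) = 0}
  add_mem' := by
    intro a b ha hb q
    rw [add_mul, map_add, ha q, hb q, add_zero]
  zero_mem' := by
    intro q
    rw [zero_mul, map_zero]
  smul_mem' := by
    intro c p hp q
    rw [smul_eq_mul, mul_comm c p, mul_assoc]
    exact hp (c * q)

end PolyExp

/-- The inverse system `D_ξ(I)`: polynomials `ω` such that `(ω(∂)p)(ξ) = 0` for all `p ∈ I`. -/
def inverseSystem {K : Type*} [Field K] {n : ℕ}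
    (I : Ideal (MvPolynomial (Fin n) K)) (ξ : Fin n → K) : Set (MvPolynomial (Fin n) K) :=
  {ω | ∀ p ∈ I, PolyExp.polyExpDual ω ξ p = 0}

/-!
Translating to `ξ` and expanding in monomials gives
`(ω(∂)p)(ξ) = Σ_β ω_β β! · [x^β] p(x + ξ)`. In characteristic 0 this shows that `ω ↦ ω·e_ξ` is
injective and that the linear forms vanishing on `𝔪_ξ^N` (`𝔪_ξ` the maximal ideal of `ξ`) are
exactly the `ω·e_ξ` with `deg ω < N`; moreover `(∂ⱼω)·e_ξ = (ω·e_ξ)((xⱼ - ξⱼ) ·)`, which gives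
stability of `D_ξ(I)` under derivation.

By the Nullstellensatz, `⋂ᵢ 𝔪_{ξᵢ}^N ⊆ I` for large `N`. The ideals `𝔪_{ξᵢ}^N` are pairwise
comaximal, so there are `Pᵢ ∈ ⋂_{j ≠ i} 𝔪_{ξⱼ}^N` with `1 - Pᵢ ∈ 𝔪_{ξᵢ}^N`. A form `Λ` vanishing
on `I` is then `Σᵢ Λ(Pᵢ ·)`, and `Λ(Pᵢ ·)` vanishes on `𝔪_{ξᵢ}^N`, hence is some `ωᵢ·e_{ξᵢ}`;
the same `Pᵢ` separate the summands, giving uniqueness. Thus `Πᵢ Dᵢ ≅ I^⊥ ≅ (𝕂[x]/I)^*`, which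
has dimension `r`.
-/

open Function

lemma Ideal.exists_partition_of_pairwise_isCoprime {R ι : Type*} [CommRing R] [Fintype ι]
    {J : ι → Ideal R} (hJ : Pairwise (IsCoprime on J)) :
    ∃ P : ι → R, (∀ i j, i ≠ j → P i ∈ J j) ∧ (∀ i, 1 - P i ∈ J i) ∧
      ∀ j, 1 - ∑ i, P i ∈ J j := by
  classical
  have hP i := Ideal.exists_forall_sub_mem_ideal hJ (Pi.single i 1)
  choose P hP using hP
  have hoff : ∀ i j, i ≠ j → P i ∈ J j := fun i j hij => by
    simpa [Pi.single_eq_of_ne hij.symm] using hP i j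
  have hdiag : ∀ i, 1 - P i ∈ J i := fun i => by
    simpa using (J i).neg_mem (hP i i)
  refine ⟨P, hoff, hdiag, fun j => ?_⟩
  rw [← Finset.add_sum_erase _ _ (Finset.mem_univ j), ← sub_sub]
  exact (J j).sub_mem (hdiag j)
    ((J j).sum_mem fun i hi => hoff i j (Finset.ne_of_mem_erase hi))

namespace PolyExp

variable {K : Type*} [Field K] {n : ℕ}

lemma pderiv_pow_monomial (i : Fin n) (k : ℕ) (α : Fin n →₀ ℕ) (c : K) :
    (((pderiv i).toLinearMap : Module.End K (MvPolynomial (Fin n) K)) ^ k) (monomial α c) =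
      monomial (α - Finsupp.single i k) ((α i).descFactorial k * c) := by
  induction k with
  | zero => simp
  | succ k ih =>
    rw [pow_succ', Module.End.mul_apply, ih, Derivation.coeFn_coe, pderiv_monomial,
      Finsupp.tsub_apply, Finsupp.single_eq_same, tsub_tsub, ← Finsupp.single_add,
      Nat.descFactorial_succ]
    push_cast
    ring_nf

lemma list_prod_pderiv_pow_monomial (β : Fin n →₀ ℕ) {l : List (Fin n)} (hl : l.Nodup)
    (α : Fin n →₀ ℕ) (c : K) :
    (l.map fun i =>
        ((pderiv i).toLinearMap : Module.End K (MvPolynomial (Fin n) K)) ^ β i).prod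
        (monomial α c) =
      monomial (α - (l.map fun i => Finsupp.single i (β i)).sum)
        ((l.map fun i => (α i).descFactorial (β i)).prod * c) := by
  induction l with
  | nil => simp
  | cons i t ih =>
    obtain ⟨hit, ht⟩ := List.nodup_cons.mp hl
    have hsum : (t.map fun j => Finsupp.single j (β j)).sum i = 0 := by
      rw [← Finsupp.applyAddHom_apply, map_list_sum, List.map_map]
      refine List.sum_eq_zero fun x hx => ?_
      obtain ⟨j, hj, rfl⟩ := List.mem_map.mp hx
      simp [show j ≠ i from fun e => hit (e ▸ hj)]
    simp only [List.map_cons, List.prod_cons, List.sum_cons, Module.End.mul_apply, ih ht,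
      pderiv_pow_monomial, Finsupp.tsub_apply, hsum, tsub_zero, tsub_tsub, add_comm]
    push_cast
    ring_nf

lemma pderivPow_monomial (β α : Fin n →₀ ℕ) (c : K) :
    pderivPow β (monomial α c) =
      monomial (α - β) ((∏ i, (α i).descFactorial (β i) : ℕ) * c) := by
  rw [pderivPow, List.ofFn_eq_map, list_prod_pderiv_pow_monomial β (List.nodup_finRange n),
    ← Fin.sum_univ_def, Finsupp.univ_sum_single, ← Fin.prod_univ_def]

noncomputable def multiFactorial (β : Fin n →₀ ℕ) : K := ∏ i, ((β i).factorial : K)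

lemma multiFactorial_ne_zero [CharZero K] (β : Fin n →₀ ℕ) : (multiFactorial β : K) ≠ 0 :=
  Finset.prod_ne_zero_iff.mpr fun i _ => Nat.cast_ne_zero.mpr (β i).factorial_ne_zero

lemma multiFactorial_add_single (β : Fin n →₀ ℕ) (j : Fin n) :
    multiFactorial (β + Finsupp.single j 1) = ((β j : K) + 1) * multiFactorial β := by
  classical
  simp only [multiFactorial, Finsupp.add_apply, Finsupp.single_apply]
  rw [← Finset.mul_prod_erase _ _ (Finset.mem_univ j),
    ← Finset.mul_prod_erase _ (fun i => ((β i).factorial : K)) (Finset.mem_univ j),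
    Finset.prod_congr rfl fun i hi => by rw [if_neg (Finset.ne_of_mem_erase hi).symm, add_zero]]
  simp [Nat.factorial_succ, mul_assoc]

lemma coeff_zero_pderivPow (β : Fin n →₀ ℕ) (p : MvPolynomial (Fin n) K) :
    coeff 0 (pderivPow β p) = multiFactorial β * coeff β p := by
  induction p using MvPolynomial.induction_on' with
  | add p q hp hq => rw [map_add, coeff_add, hp, hq, coeff_add, mul_add]
  | monomial α c =>
    rw [pderivPow_monomial, coeff_monomial, coeff_monomial]
    by_cases hαβ : α = β
    · subst hαβ
      simp [multiFactorial, Nat.descFactorial_self]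
    · rw [if_neg hαβ, mul_zero, ite_eq_right_iff]
      intro h
      obtain ⟨i, hi⟩ : ∃ i, α i < β i := by
        by_contra! hle
        exact hαβ (le_antisymm (tsub_eq_zero_iff_le.mp h) hle)
      rw [Finset.prod_eq_zero (Finset.mem_univ i) (Nat.descFactorial_eq_zero_iff_lt.mpr hi)]
      simp

noncomputable def shift (ξ : Fin n → K) : MvPolynomial (Fin n) K ≃ₐ[K] MvPolynomial (Fin n) K :=
  AlgEquiv.ofAlgHom (aeval fun i => X i + C (ξ i)) (aeval fun i => X i - C (ξ i))
    (by ext i; simp) (by ext i; simp)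

@[simp]
lemma shift_X (ξ : Fin n → K) (i : Fin n) : shift ξ (X i) = X i + C (ξ i) := by
  simp [shift]

@[simp]
lemma shift_C (ξ : Fin n → K) (a : K) : shift ξ (C a) = C a :=
  (shift ξ).commutes a

@[simp]
lemma shift_symm_X (ξ : Fin n → K) (i : Fin n) : (shift ξ).symm (X i) = X i - C (ξ i) := by
  simp [shift]

lemma coeff_zero_shift (ξ : Fin n → K) (p : MvPolynomial (Fin n) K) :
    coeff 0 (shift ξ p) = eval ξ p := by
  change constantCoeff (shift ξ p) = eval ξ p
  induction p using MvPolynomial.induction_on with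
  | C a => simp
  | add p q hp hq => simp [hp, hq]
  | mul_X p i hp => simp [hp]

lemma pderiv_shift (ξ : Fin n → K) (j : Fin n) (p : MvPolynomial (Fin n) K) :
    pderiv j (shift ξ p) = shift ξ (pderiv j p) := by
  induction p using MvPolynomial.induction_on with
  | C a => simp
  | add p q hp hq => simp [hp, hq]
  | mul_X p i hp => simp [hp, pderiv_X, Pi.single_apply, apply_ite]

lemma pderivPow_shift (ξ : Fin n → K) (β : Fin n →₀ ℕ) (p : MvPolynomial (Fin n) K) :
    pderivPow β (shift ξ p) = shift ξ (pderivPow β p) := by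
  have hcomm : Commute ((shift ξ).toLinearMap : Module.End K (MvPolynomial (Fin n) K))
      (pderivPow β) := by
    refine Commute.list_prod_right _ _ fun D hD => ?_
    obtain ⟨i, rfl⟩ := List.mem_ofFn.mp hD
    exact Commute.pow_right (LinearMap.ext fun q => (pderiv_shift ξ i q).symm) _
  exact (LinearMap.congr_fun hcomm p).symm

lemma eval_pderivPow (ξ : Fin n → K) (β : Fin n →₀ ℕ) (p : MvPolynomial (Fin n) K) :
    eval ξ (pderivPow β p) = multiFactorial β * coeff β (shift ξ p) := by
  rw [← coeff_zero_shift, ← pderivPow_shift, coeff_zero_pderivPow]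

lemma diffOp_eq_sum_of_support_subset {ω : MvPolynomial (Fin n) K}
    {s : Finset (Fin n →₀ ℕ)} (hs : ω.support ⊆ s) :
    diffOp ω = ∑ β ∈ s, ω.coeff β • pderivPow β :=
  Finset.sum_subset hs fun β _ hβ => by rw [notMem_support_iff.mp hβ, zero_smul]

lemma diffOp_add (ω ω' : MvPolynomial (Fin n) K) :
    diffOp (ω + ω') = diffOp ω + diffOp ω' := by
  classical
  rw [diffOp_eq_sum_of_support_subset support_add,
    diffOp_eq_sum_of_support_subset Finset.subset_union_left,
    diffOp_eq_sum_of_support_subset Finset.subset_union_right, ← Finset.sum_add_distrib]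
  simp only [coeff_add, add_smul]

lemma diffOp_smul (c : K) (ω : MvPolynomial (Fin n) K) :
    diffOp (c • ω) = c • diffOp ω := by
  rw [diffOp_eq_sum_of_support_subset support_smul, diffOp, Finset.smul_sum]
  simp only [coeff_smul, smul_eq_mul, smul_smul]

noncomputable def polyExpDualₗ (ξ : Fin n → K) :
    MvPolynomial (Fin n) K →ₗ[K] Module.Dual K (MvPolynomial (Fin n) K) where
  toFun ω := polyExpDual ω ξ
  map_add' ω ω' := by simp only [polyExpDual, diffOp_add, LinearMap.comp_add]
  map_smul' c ω := by simp only [polyExpDual, diffOp_smul, LinearMap.comp_smul, RingHom.id_apply]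

lemma polyExpDualₗ_apply (ξ : Fin n → K) (ω : MvPolynomial (Fin n) K) :
    polyExpDualₗ ξ ω = polyExpDual ω ξ :=
  rfl

lemma polyExpDual_apply (ω : MvPolynomial (Fin n) K) (ξ : Fin n → K)
    (p : MvPolynomial (Fin n) K) :
    polyExpDual ω ξ p =
      ∑ β ∈ ω.support, ω.coeff β * (multiFactorial β * coeff β (shift ξ p)) := by
  simp only [polyExpDual, evalDual, diffOp, LinearMap.comp_apply, LinearMap.sum_apply,
    LinearMap.smul_apply, map_sum, map_smul, AlgHom.toLinearMap_apply, aeval_eq_eval,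
    eval_pderivPow, smul_eq_mul]

lemma polyExpDual_shift_symm_monomial (ω : MvPolynomial (Fin n) K) (ξ : Fin n → K)
    (β : Fin n →₀ ℕ) :
    polyExpDual ω ξ ((shift ξ).symm (monomial β 1)) = ω.coeff β * multiFactorial β := by
  classical
  rw [polyExpDual_apply, AlgEquiv.apply_symm_apply]
  simp only [coeff_monomial, mul_ite, mul_one, mul_zero, Finset.sum_ite_eq, mem_support_iff]
  split_ifs with h
  · rfl
  · rw [not_not.mp h, zero_mul]

lemma dual_ext_shift (ξ : Fin n → K) {Λ₁ Λ₂ : Module.Dual K (MvPolynomial (Fin n) K)}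
    (h : ∀ β, Λ₁ ((shift ξ).symm (monomial β 1)) = Λ₂ ((shift ξ).symm (monomial β 1))) :
    Λ₁ = Λ₂ := by
  have hcomp : Λ₁ ∘ₗ (shift ξ).symm.toLinearMap = Λ₂ ∘ₗ (shift ξ).symm.toLinearMap :=
    MvPolynomial.linearMap_ext fun β => LinearMap.ext_ring (h β)
  exact LinearMap.ext fun p => by simpa using LinearMap.congr_fun hcomp (shift ξ p)

lemma polyExpDualₗ_injective [CharZero K] (ξ : Fin n → K) :
    Injective (polyExpDualₗ ξ) := by
  refine (injective_iff_map_eq_zero _).mpr fun ω h => ?_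
  ext β
  have hβ := polyExpDual_shift_symm_monomial ω ξ β
  rw [← polyExpDualₗ_apply, h, LinearMap.zero_apply] at hβ
  simpa [multiFactorial_ne_zero] using hβ.symm

lemma polyExpDual_pderiv (ω : MvPolynomial (Fin n) K) (ξ : Fin n → K) (j : Fin n) :
    polyExpDual (pderiv j ω) ξ = polyExpDual ω ξ ∘ₗ LinearMap.mulLeft K (X j - C (ξ j)) := by
  refine dual_ext_shift ξ fun β => ?_
  have hmul : (X j - C (ξ j)) * (shift ξ).symm (monomial β 1) =
      (shift ξ).symm (monomial (β + Finsupp.single j 1) 1) := by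
    rw [← shift_symm_X, ← map_mul, X, monomial_mul, one_mul, add_comm]
  rw [LinearMap.comp_apply, LinearMap.mulLeft_apply, hmul, polyExpDual_shift_symm_monomial,
    polyExpDual_shift_symm_monomial, coeff_pderiv, multiFactorial_add_single]
  ring

lemma mem_map_shift_symm_iff {ξ : Fin n → K} {J : Ideal (MvPolynomial (Fin n) K)}
    {p : MvPolynomial (Fin n) K} : p ∈ J.map (shift ξ).symm ↔ shift ξ p ∈ J := by
  rw [Ideal.mem_map_of_equiv]
  exact ⟨by rintro ⟨q, hq, rfl⟩; simpa using hq, fun h => ⟨_, h, by simp⟩⟩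

lemma vanishingIdeal_singleton_eq_map (ξ : Fin n → K) :
    vanishingIdeal K {ξ} = (idealOfVars (Fin n) K).map (shift ξ).symm := by
  ext p
  rw [mem_map_shift_symm_iff, mem_vanishingIdeal_singleton_iff, ← pow_one (idealOfVars _ _),
    mem_pow_idealOfVars_iff']
  simp [Finsupp.degree_eq_zero_iff, coeff_zero_shift, aeval_eq_eval]

lemma mem_vanishingIdeal_singleton_pow_iff {ξ : Fin n → K} {N : ℕ}
    {p : MvPolynomial (Fin n) K} :
    p ∈ vanishingIdeal K {ξ} ^ N ↔
      ∀ β : Fin n →₀ ℕ, β.degree < N → coeff β (shift ξ p) = 0 := by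
  rw [vanishingIdeal_singleton_eq_map, ← Ideal.map_pow, mem_map_shift_symm_iff,
    mem_pow_idealOfVars_iff']

lemma polyExpDual_eq_zero_of_mem_pow {ω : MvPolynomial (Fin n) K} {ξ : Fin n → K} {N : ℕ}
    (hω : ∀ β ∈ ω.support, β.degree < N) {p : MvPolynomial (Fin n) K}
    (hp : p ∈ vanishingIdeal K {ξ} ^ N) : polyExpDual ω ξ p = 0 := by
  rw [polyExpDual_apply]
  refine Finset.sum_eq_zero fun β hβ => ?_
  rw [mem_vanishingIdeal_singleton_pow_iff.mp hp β (hω β hβ), mul_zero, mul_zero]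

lemma exists_polyExpDual_eq_of_forall_mem_pow [CharZero K] {ξ : Fin n → K} {N : ℕ}
    {Λ : Module.Dual K (MvPolynomial (Fin n) K)}
    (hΛ : ∀ p ∈ vanishingIdeal K {ξ} ^ N, Λ p = 0) :
    ∃ ω : MvPolynomial (Fin n) K, (∀ β ∈ ω.support, β.degree < N) ∧ polyExpDual ω ξ = Λ := by
  classical
  let c β := Λ ((shift ξ).symm (monomial β 1)) / multiFactorial β
  let ω := ∑ β ∈ (Finsupp.finite_of_degree_lt N).toFinset, monomial β (c β)
  have hcoeff : ∀ β, ω.coeff β = if β.degree < N then c β else 0 := by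
    simp [ω, coeff_sum, coeff_monomial]
  refine ⟨ω, fun β hβ => ?_, dual_ext_shift ξ fun β => ?_⟩
  · by_contra h
    exact mem_support_iff.mp hβ (by rw [hcoeff, if_neg h])
  rw [polyExpDual_shift_symm_monomial, hcoeff]
  split_ifs with h
  · exact div_mul_cancel₀ _ (multiFactorial_ne_zero β)
  · refine (zero_mul _).trans (hΛ _ (mem_vanishingIdeal_singleton_pow_iff.mpr fun γ hγ => ?_)).symm
    rw [AlgEquiv.apply_symm_apply, coeff_monomial, if_neg]
    rintro rfl
    exact h hγ

lemma vanishingIdeal_singleton_injective :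
    Injective fun ξ : Fin n → K => vanishingIdeal K {ξ} := by
  intro ξ η h
  funext k
  have hk : X k - C (ξ k) ∈ vanishingIdeal K {η} := by
    rw [← show vanishingIdeal K {ξ} = vanishingIdeal K {η} from h,
      mem_vanishingIdeal_singleton_iff]
    simp
  simpa [sub_eq_zero, eq_comm] using (mem_vanishingIdeal_singleton_iff _ _).mp hk

lemma pairwise_isCoprime_vanishingIdeal_pow {ι : Type*} {ξ : ι → Fin n → K}
    (hξ : Injective ξ) (N : ℕ) :
    Pairwise (IsCoprime on fun i => vanishingIdeal K {ξ i} ^ N) := fun _ _ hij =>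
  (Ideal.isCoprime_of_isMaximal (vanishingIdeal_singleton_injective.ne (hξ.ne hij))).pow

noncomputable def polyExpDualSum {ι : Type*} [Fintype ι] (ξ : ι → Fin n → K) :
    (ι → MvPolynomial (Fin n) K) →ₗ[K] Module.Dual K (MvPolynomial (Fin n) K) :=
  ∑ i, polyExpDualₗ (ξ i) ∘ₗ LinearMap.proj i

lemma polyExpDualSum_apply {ι : Type*} [Fintype ι] (ξ : ι → Fin n → K)
    (ω : ι → MvPolynomial (Fin n) K) :
    polyExpDualSum ξ ω = ∑ i, polyExpDual (ω i) (ξ i) := by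
  simp [polyExpDualSum, polyExpDualₗ_apply]

lemma polyExpDualSum_injective [CharZero K] {ι : Type*} [Fintype ι] {ξ : ι → Fin n → K}
    (hξ : Injective ξ) : Injective (polyExpDualSum ξ) := by
  classical
  refine (injective_iff_map_eq_zero _).mpr fun ω h => ?_
  rw [polyExpDualSum_apply] at h
  set N := ∑ i, (ω i).totalDegree + 1
  have hN : ∀ i, ∀ β ∈ (ω i).support, β.degree < N := fun i β hβ =>
    Nat.lt_succ_of_le ((le_totalDegree hβ).trans
      (Finset.single_le_sum (f := fun j => (ω j).totalDegree) (fun j _ => Nat.zero_le _)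
        (Finset.mem_univ i)))
  obtain ⟨P, hoff, hdiag, -⟩ :=
    Ideal.exists_partition_of_pairwise_isCoprime (pairwise_isCoprime_vanishingIdeal_pow hξ N)
  -- `ωⱼ·e_{ξⱼ}` kills `𝔪_{ξⱼ}^N`, so testing the sum against `P i * p` isolates the `i`-th term
  funext i
  refine (injective_iff_map_eq_zero (polyExpDualₗ (ξ i))).mp (polyExpDualₗ_injective _) _ ?_
  refine LinearMap.ext fun p => ?_
  have hloc : polyExpDual (ω i) (ξ i) ((1 - P i) * p) = 0 :=
    polyExpDual_eq_zero_of_mem_pow (hN i) (Ideal.mul_mem_right _ _ (hdiag i))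
  have hsum := LinearMap.congr_fun h (P i * p)
  rw [LinearMap.sum_apply, Finset.sum_eq_single i (fun j _ hji => polyExpDual_eq_zero_of_mem_pow
    (hN j) (Ideal.mul_mem_right _ _ (hoff i j hji.symm))) (by simp),
    LinearMap.zero_apply] at hsum
  calc polyExpDual (ω i) (ξ i) p
      = polyExpDual (ω i) (ξ i) (P i * p) + polyExpDual (ω i) (ξ i) ((1 - P i) * p) := by
        rw [← map_add]
        congr 1
        ring
    _ = 0 := by rw [hsum, hloc, add_zero]

lemma exists_sum_polyExpDual_eq [CharZero K] {ι : Type*} [Fintype ι] {ξ : ι → Fin n → K}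
    (hξ : Injective ξ) {N : ℕ} {J : Ideal (MvPolynomial (Fin n) K)}
    (hJ : ⨅ i, vanishingIdeal K {ξ i} ^ N ≤ J) {Λ : Module.Dual K (MvPolynomial (Fin n) K)}
    (hΛ : ∀ p ∈ J, Λ p = 0) :
    ∃ ω : ι → MvPolynomial (Fin n) K,
      (∀ i, ∀ p ∈ J, polyExpDual (ω i) (ξ i) p = 0) ∧ ∑ i, polyExpDual (ω i) (ξ i) = Λ := by
  obtain ⟨P, hoff, -, hsum⟩ :=
    Ideal.exists_partition_of_pairwise_isCoprime (pairwise_isCoprime_vanishingIdeal_pow hξ N)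
  have hloc : ∀ i, ∀ q ∈ vanishingIdeal K {ξ i} ^ N, (Λ ∘ₗ LinearMap.mulLeft K (P i)) q = 0 := by
    intro i q hq
    refine hΛ _ (hJ (Ideal.mem_iInf.mpr fun j => ?_))
    rcases eq_or_ne i j with rfl | hij
    · exact Ideal.mul_mem_left _ _ hq
    · exact Ideal.mul_mem_right _ _ (hoff i j hij)
  choose ω _ hω using fun i => exists_polyExpDual_eq_of_forall_mem_pow (hloc i)
  refine ⟨ω, fun i p hp => ?_, LinearMap.ext fun p => ?_⟩
  · rw [hω i]
    exact hΛ _ (J.mul_mem_left _ hp)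
  · have hrest : Λ ((1 - ∑ i, P i) * p) = 0 :=
      hΛ _ (J.mul_mem_right _ (hJ (Ideal.mem_iInf.mpr hsum)))
    rw [sub_mul, one_mul, map_sub, sub_eq_zero, Finset.sum_mul, map_sum] at hrest
    simpa [hω] using hrest.symm

lemma exists_iInf_vanishingIdeal_pow_le [IsAlgClosed K] {ι : Type*} [Fintype ι]
    {ξ : ι → Fin n → K} (hξ : Injective ξ) {I : Ideal (MvPolynomial (Fin n) K)}
    (hzero : Set.range ξ = zeroLocus K I) :
    ∃ N, ⨅ i, vanishingIdeal K {ξ i} ^ N ≤ I := by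
  have hprod : ∏ i, vanishingIdeal K {ξ i} ≤ I.radical := by
    rw [← vanishingIdeal_zeroLocus_eq_radical (K := K), ← hzero]
    rintro p hp _ ⟨i, rfl⟩
    exact Ideal.prod_le_inf.trans (Finset.inf_le (Finset.mem_univ i)) hp _ rfl
  obtain ⟨N, hN⟩ := Ideal.exists_pow_le_of_le_radical_of_fg hprod (IsNoetherian.noetherian _)
  refine ⟨N, le_of_eq_of_le ?_ hN⟩
  rw [← Finset.prod_pow, Ideal.prod_eq_iInf_of_pairwise_isCoprime
    ((pairwise_isCoprime_vanishingIdeal_pow hξ N).set_pairwise _)]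
  simp

end PolyExp

open PolyExp

lemma Ideal.finrank_dualAnnihilator_restrictScalars {K A : Type*} [Field K] [CommRing A]
    [Algebra K A] (I : Ideal A) :
    Module.finrank K (I.restrictScalars K).dualAnnihilator = Module.finrank K (A ⧸ I) := by
  rw [← (Submodule.dualQuotEquivDualAnnihilator _).finrank_eq, Subspace.dual_finrank_eq,
    (Submodule.Quotient.restrictScalarsEquiv K I).finrank_eq]

instance Ideal.finite_dualAnnihilator_restrictScalars {K A : Type*} [Field K] [CommRing A]
    [Algebra K A] (I : Ideal A) [Module.Finite K (A ⧸ I)] :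
    Module.Finite K (I.restrictScalars K).dualAnnihilator :=
  have : Module.Finite K (A ⧸ I.restrictScalars K) :=
    Module.Finite.equiv (Submodule.Quotient.restrictScalarsEquiv K I).symm
  Module.Finite.equiv (Submodule.dualQuotEquivDualAnnihilator _)

section InverseSystem

variable {K : Type*} [Field K] {n : ℕ}

noncomputable def inverseSystemSubmodule (I : Ideal (MvPolynomial (Fin n) K)) (ξ : Fin n → K) :
    Submodule K (MvPolynomial (Fin n) K) :=
  (I.restrictScalars K).dualAnnihilator.comap (polyExpDualₗ ξ)

lemma coe_inverseSystemSubmodule (I : Ideal (MvPolynomial (Fin n) K)) (ξ : Fin n → K) :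
    (inverseSystemSubmodule I ξ : Set (MvPolynomial (Fin n) K)) = inverseSystem I ξ := by
  ext ω
  simp [inverseSystemSubmodule, inverseSystem, Submodule.mem_dualAnnihilator, polyExpDualₗ_apply]

lemma span_inverseSystem (I : Ideal (MvPolynomial (Fin n) K)) (ξ : Fin n → K) :
    Submodule.span K (inverseSystem I ξ) = inverseSystemSubmodule I ξ := by
  rw [← coe_inverseSystemSubmodule, Submodule.span_eq]

lemma pderiv_mem_inverseSystem {I : Ideal (MvPolynomial (Fin n) K)} {ξ : Fin n → K}
    {ω : MvPolynomial (Fin n) K} (hω : ω ∈ inverseSystem I ξ) (j : Fin n) :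
    pderiv j ω ∈ inverseSystem I ξ := fun p hp => by
  rw [polyExpDual_pderiv, LinearMap.comp_apply]
  exact hω _ (I.mul_mem_left _ hp)

end InverseSystem

section Duality

variable {K : Type*} [Field K] [CharZero K] [IsAlgClosed K] {n : ℕ} {ι : Type*} [Fintype ι]
  {I : Ideal (MvPolynomial (Fin n) K)} {ξ : ι → Fin n → K}

theorem forall_eq_zero_iff_exists_sum_polyExpDual (hξ : Injective ξ)
    (hzero : Set.range ξ = zeroLocus K I) (Λ : Module.Dual K (MvPolynomial (Fin n) K)) :
    (∀ p ∈ I, Λ p = 0) ↔ ∃ ω : ι → MvPolynomial (Fin n) K,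
      (∀ i, ω i ∈ inverseSystem I (ξ i)) ∧ Λ = ∑ i, polyExpDual (ω i) (ξ i) := by
  refine ⟨fun hΛ => ?_, ?_⟩
  · obtain ⟨N, hN⟩ := exists_iInf_vanishingIdeal_pow_le hξ hzero
    obtain ⟨ω, hω, hsum⟩ := exists_sum_polyExpDual_eq hξ hN hΛ
    exact ⟨ω, hω, hsum.symm⟩
  · rintro ⟨ω, hω, rfl⟩ p hp
    rw [LinearMap.sum_apply]
    exact Finset.sum_eq_zero fun i _ => hω i p hp

theorem sum_finrank_span_inverseSystem [Module.Finite K (MvPolynomial (Fin n) K ⧸ I)]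
    (hξ : Injective ξ) (hzero : Set.range ξ = zeroLocus K I) :
    ∑ i, Module.finrank K (Submodule.span K (inverseSystem I (ξ i))) =
      Module.finrank K (MvPolynomial (Fin n) K ⧸ I) := by
  let D i := inverseSystemSubmodule I (ξ i)
  let Φ : ((i : ι) → D i) →ₗ[K] Module.Dual K (MvPolynomial (Fin n) K) :=
    polyExpDualSum ξ ∘ₗ LinearMap.pi fun i => (D i).subtype ∘ₗ LinearMap.proj i
  have hΦ : Injective Φ := (polyExpDualSum_injective hξ).comp fun a b h =>
    funext fun i => Subtype.ext (congrFun h i)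
  have hrange : LinearMap.range Φ = (I.restrictScalars K).dualAnnihilator := by
    ext Λ
    simp only [LinearMap.mem_range, Submodule.mem_dualAnnihilator, Submodule.restrictScalars_mem]
    rw [forall_eq_zero_iff_exists_sum_polyExpDual hξ hzero]
    constructor
    · rintro ⟨ω, rfl⟩
      refine ⟨fun i => ω i, fun i => ?_, by simp [Φ, polyExpDualSum_apply]⟩
      rw [← coe_inverseSystemSubmodule]
      exact (ω i).2
    · rintro ⟨ω, hω, rfl⟩
      refine ⟨fun i => ⟨ω i, by rw [← SetLike.mem_coe, coe_inverseSystemSubmodule]; exact hω i⟩, ?_⟩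
      simp [Φ, polyExpDualSum_apply]
  have : Module.Finite K ((i : ι) → D i) :=
    Module.Finite.equiv ((LinearEquiv.ofInjective Φ hΦ).trans (LinearEquiv.ofEq _ _ hrange)).symm
  have (i : ι) : Module.Finite K (D i) :=
    Module.Finite.of_surjective (LinearMap.proj (φ := fun i => D i) i) (surjective_eval i)
  calc ∑ i, Module.finrank K (Submodule.span K (inverseSystem I (ξ i)))
      = Module.finrank K ((i : ι) → D i) := by
        rw [Module.finrank_pi_fintype]
        exact Finset.sum_congr rfl fun i _ => by rw [span_inverseSystem]
    _ = Module.finrank K (LinearMap.range Φ) := (LinearMap.finrank_range_of_inj hΦ).symm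
    _ = Module.finrank K (MvPolynomial (Fin n) K ⧸ I) := by
        rw [hrange, Ideal.finrank_dualAnnihilator_restrictScalars]

end Duality

/-- Description of the dual of an Artinian algebra `A = 𝕂[x]/I` of
dimension `r` over an algebraically closed field `𝕂` of characteristic 0, with zero set
`{ξ₁,…,ξ_{r'}}`: (i) each `Dᵢ = D_{ξᵢ}(I)` is stable under partial derivatives;
(ii) `Σ dim Dᵢ = r`; (iii) a linear form vanishes on `I` iff it is `Σᵢ ωᵢ·e_{ξᵢ}` with
`ωᵢ ∈ Dᵢ`, and such a decomposition is unique. -/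
theorem statement3 {K : Type*} [Field K] [CharZero K] [IsAlgClosed K] {n : ℕ}
    (r r' : ℕ) (I : Ideal (MvPolynomial (Fin n) K))
    (hfin : Module.Finite K (MvPolynomial (Fin n) K ⧸ I))
    (hr : Module.finrank K (MvPolynomial (Fin n) K ⧸ I) = r)
    (ξ : Fin r' → Fin n → K) (hξ : Function.Injective ξ)
    (hzero : Set.range ξ = {x : Fin n → K | ∀ p ∈ I, MvPolynomial.aeval x p = 0}) :
    (∀ i : Fin r', ∀ ω ∈ inverseSystem I (ξ i), ∀ j : Fin n,
        MvPolynomial.pderiv j ω ∈ inverseSystem I (ξ i)) ∧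
    (∑ i : Fin r', Module.finrank K (Submodule.span K (inverseSystem I (ξ i)))) = r ∧
    (∀ Λ : Module.Dual K (MvPolynomial (Fin n) K),
      ((∀ p ∈ I, Λ p = 0) ↔
        ∃ ω : Fin r' → MvPolynomial (Fin n) K,
          (∀ i, ω i ∈ inverseSystem I (ξ i)) ∧
          Λ = ∑ i, PolyExp.polyExpDual (ω i) (ξ i)) ∧
      ((∀ p ∈ I, Λ p = 0) →
        ∃! ω : Fin r' → MvPolynomial (Fin n) K,
          (∀ i, ω i ∈ inverseSystem I (ξ i)) ∧
          Λ = ∑ i, PolyExp.polyExpDual (ω i) (ξ i))) := by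
  refine ⟨fun _ _ hω => pderiv_mem_inverseSystem hω,
    hr ▸ sum_finrank_span_inverseSystem hξ hzero,
    fun Λ => ⟨forall_eq_zero_iff_exists_sum_polyExpDual hξ hzero Λ, fun hΛ => ?_⟩⟩
  obtain ⟨ω, hω, rfl⟩ := (forall_eq_zero_iff_exists_sum_polyExpDual hξ hzero _).mp hΛ
  refine ⟨ω, ⟨hω, rfl⟩, fun ω' ⟨_, hω'⟩ => polyExpDualSum_injective hξ ?_⟩
  simpa only [polyExpDualSum_apply] using hω'.symm
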